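/- arXiv:2602.18077 — 2 statements merged into one kernel-verified Lean document; each statement's English description precedes it below -/
import Mathlib

section
/- Fix channels h_1, …, h_K ∈ ℂ^M, hardware-impairment parameters m_t, m_r ∈ (0,1), noise powers σ_1², …, σ_K² > 0, and a power budget P_max > 0. Set the SIC imperfection coefficient δ_SIC = 1. Let U : ℝ^K → ℝ be monotonically nondecreasing in each coordinate. If (w_c⋆, w_1⋆, …, w_K⋆) maximizes U(γ_{p,1}, …, γ_{p,K}) over the feasible set F = {(w_c, w_1, …, w_K) ∈ (ℂ^M)^{K+1} : ‖w_c‖² + Σ_{k=1}^K ‖w_k‖² ≤ P_max}, then the point (0, w_1⋆, …, w_K⋆) obtained by replacing the common-stream beamformer with the zero vector also lies in F and is also a maximizer. In particular, there exists an optimal solution with common-stream beamformer equal to 0, i.e., the optimal RSMA structure degenerates into SDMA. -/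
open Matrix Finset

noncomputable section

/-- Outer product `w wᴴ`. -/
def outerProd {M : ℕ} (w : Fin M → ℂ) : Matrix (Fin M) (Fin M) ℂ :=
  Matrix.vecMulVec w (star w)

/-- `diag~(A)`: the diagonal matrix with the same diagonal as `A`. -/
def diagTilde {M : ℕ} (A : Matrix (Fin M) (Fin M) ℂ) : Matrix (Fin M) (Fin M) ℂ :=
  Matrix.diagonal (fun i => A i i)

/-- `Φ = hᴴ [m_r A + m_t(1+m_r) diag~(A)] h + (1+m_r) σ²` (real part). -/
def Phi {M : ℕ} (mr mt σ2 : ℝ) (h : Fin M → ℂ) (A : Matrix (Fin M) (Fin M) ℂ) : ℝ :=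
  (star h ⬝ᵥ (((mr : ℂ) • A + ((mt * (1 + mr) : ℝ) : ℂ) • diagTilde A)).mulVec h).re
    + (1 + mr) * σ2

/-- `A = w_c w_cᴴ + ∑ₖ w_k w_kᴴ`. -/
def Amat {M K : ℕ} (wc : Fin M → ℂ) (w : Fin K → Fin M → ℂ) : Matrix (Fin M) (Fin M) ℂ :=
  outerProd wc + ∑ k, outerProd (w k)

/-- Private-stream SINR of user `k` under SIC imperfection coefficient `δ`. -/
def sinr {M K : ℕ} (mr mt : ℝ) (σ2 : Fin K → ℝ) (h : Fin K → Fin M → ℂ) (δ : ℝ)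
    (wc : Fin M → ℂ) (w : Fin K → Fin M → ℂ) (k : Fin K) : ℝ :=
  ‖star (h k) ⬝ᵥ w k‖ ^ 2 /
    ((∑ i ∈ Finset.univ.erase k, ‖star (h k) ⬝ᵥ w i‖ ^ 2)
      + δ ^ 2 * ‖star (h k) ⬝ᵥ wc‖ ^ 2 + Phi mr mt (σ2 k) (h k) (Amat wc w))

/-- Power of a beamformer `‖w‖²`. -/
def pw {M : ℕ} (w : Fin M → ℂ) : ℝ := ∑ j, ‖w j‖ ^ 2

/-! Removing the common stream deletes its interference term `δ² |h_kᴴ w_c|²` and lowers `A` by the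
positive semidefinite `w_c w_cᴴ`, which can only lower the hardware-impairment term `Φ_{c,k}`. So every
private SINR weakly increases, for any `δ`, and a monotone utility does not decrease. -/

open scoped ComplexOrder

lemma Matrix.PosSemidef.diagTilde {M : ℕ} {A : Matrix (Fin M) (Fin M) ℂ} (hA : A.PosSemidef) :
    (diagTilde A).PosSemidef :=
  posSemidef_diagonal_iff.mpr fun _ => hA.diag_nonneg

lemma posSemidef_outerProd {M : ℕ} (w : Fin M → ℂ) : (outerProd w).PosSemidef :=
  posSemidef_vecMulVec_self_star w

lemma posSemidef_Amat {M K : ℕ} (wc : Fin M → ℂ) (w : Fin K → Fin M → ℂ) :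
    (Amat wc w).PosSemidef :=
  (posSemidef_outerProd wc).add (posSemidef_sum _ fun k _ => posSemidef_outerProd (w k))

lemma Amat_eq_add_outerProd {M K : ℕ} (wc : Fin M → ℂ) (w : Fin K → Fin M → ℂ) :
    Amat wc w = Amat 0 w + outerProd wc := by
  have : outerProd (0 : Fin M → ℂ) = 0 := by simp [outerProd]
  rw [Amat, Amat, this, zero_add, add_comm]

section Phi

variable {M : ℕ} {mr mt : ℝ} (σ2 : ℝ) (h : Fin M → ℂ)

-- `Phi mr mt 0 h` is the impairment quadratic form alone, which is additive in `A`.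
lemma Phi_add (A B : Matrix (Fin M) (Fin M) ℂ) :
    Phi mr mt σ2 h (A + B) = Phi mr mt σ2 h A + Phi mr mt 0 h B := by
  have : diagTilde (A + B) = diagTilde A + diagTilde B := by
    simp [diagTilde, Matrix.diagonal_add]
  simp only [Phi, this, smul_add, add_mulVec, dotProduct_add, Complex.add_re]
  ring

lemma Phi_zero_noise_nonneg (hmr : 0 ≤ mr) (hmt : 0 ≤ mt) {A : Matrix (Fin M) (Fin M) ℂ}
    (hA : A.PosSemidef) : 0 ≤ Phi mr mt 0 h A := by
  have hc : (0 : ℂ) ≤ ((mt * (1 + mr) : ℝ) : ℂ) := Complex.zero_le_real.mpr (by positivity)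
  have hL := ((hA.smul (Complex.zero_le_real.mpr hmr)).add
    (hA.diagTilde.smul hc)).dotProduct_mulVec_nonneg h
  simpa [Phi] using (Complex.nonneg_iff.mp hL).1

lemma Phi_pos (hmr : 0 ≤ mr) (hmt : 0 ≤ mt) (hσ : 0 < σ2) {A : Matrix (Fin M) (Fin M) ℂ}
    (hA : A.PosSemidef) : 0 < Phi mr mt σ2 h A := by
  have hsplit : Phi mr mt σ2 h A = Phi mr mt 0 h A + (1 + mr) * σ2 := by simp [Phi]
  rw [hsplit]
  have := Phi_zero_noise_nonneg h hmr hmt hA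
  positivity

end Phi

lemma sinr_le_sinr_zero_common {M K : ℕ} {mr mt : ℝ} (hmr : 0 ≤ mr) (hmt : 0 ≤ mt)
    {σ2 : Fin K → ℝ} (hσ : ∀ k, 0 < σ2 k) (h : Fin K → Fin M → ℂ) (δ : ℝ)
    (wc : Fin M → ℂ) (w : Fin K → Fin M → ℂ) (k : Fin K) :
    sinr mr mt σ2 h δ wc w k ≤ sinr mr mt σ2 h δ 0 w k := by
  have hΦ := Phi_add (mr := mr) (mt := mt) (σ2 k) (h k) (Amat 0 w) (outerProd wc)
  rw [← Amat_eq_add_outerProd] at hΦ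
  have hΦ0 := Phi_pos (σ2 k) (h k) hmr hmt (hσ k) (posSemidef_Amat 0 w)
  have hΦc := Phi_zero_noise_nonneg (h k) hmr hmt (posSemidef_outerProd wc)
  have hI : 0 ≤ ∑ i ∈ univ.erase k, ‖star (h k) ⬝ᵥ w i‖ ^ 2 := by positivity
  unfold sinr
  rw [dotProduct_zero, norm_zero]
  apply div_le_div_of_nonneg_left (by positivity) (by positivity)
  nlinarith [sq_nonneg δ, sq_nonneg ‖star (h k) ⬝ᵥ wc‖]

theorem stmt0_general {M K : ℕ} (h : Fin K → Fin M → ℂ) (mt mr : ℝ)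
    (hmt : mt ∈ Set.Ioo (0:ℝ) 1) (hmr : mr ∈ Set.Ioo (0:ℝ) 1)
    (σ2 : Fin K → ℝ) (hσ : ∀ k, 0 < σ2 k) (Pmax : ℝ)
    (U : (Fin K → ℝ) → ℝ)
    (hU : ∀ x y : Fin K → ℝ, (∀ k, x k ≤ y k) → U x ≤ U y)
    (wcs : Fin M → ℂ) (ws : Fin K → Fin M → ℂ)
    (hfeas : pw wcs + ∑ k, pw (ws k) ≤ Pmax)
    (hopt : ∀ (wc : Fin M → ℂ) (w : Fin K → Fin M → ℂ),
      pw wc + ∑ k, pw (w k) ≤ Pmax →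
      U (fun k => sinr mr mt σ2 h 1 wc w k) ≤ U (fun k => sinr mr mt σ2 h 1 wcs ws k)) :
    (pw (0 : Fin M → ℂ) + ∑ k, pw (ws k) ≤ Pmax) ∧
    (∀ (wc : Fin M → ℂ) (w : Fin K → Fin M → ℂ),
      pw wc + ∑ k, pw (w k) ≤ Pmax →
      U (fun k => sinr mr mt σ2 h 1 wc w k)
        ≤ U (fun k => sinr mr mt σ2 h 1 (0 : Fin M → ℂ) ws k)) := by
  refine ⟨?_, fun wc w hw => ?_⟩
  · have hpw : 0 ≤ pw wcs := by unfold pw; positivity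
    have hpw0 : pw (0 : Fin M → ℂ) = 0 := by simp [pw]
    linarith
  · exact (hopt wc w hw).trans
      (hU _ _ (sinr_le_sinr_zero_common hmr.1.le hmt.1.le hσ h 1 wcs ws))

/-- at δ_SIC = 1, replacing the common-stream beamformer of a maximizer by 0
stays feasible and is still a maximizer; in particular an optimal solution with
zero common-stream beamformer exists (RSMA degenerates into SDMA). -/
theorem stmt0 {M K : ℕ} (h : Fin K → Fin M → ℂ) (mt mr : ℝ)
    (hmt : mt ∈ Set.Ioo (0:ℝ) 1) (hmr : mr ∈ Set.Ioo (0:ℝ) 1)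
    (σ2 : Fin K → ℝ) (hσ : ∀ k, 0 < σ2 k) (Pmax : ℝ) (hP : 0 < Pmax)
    (U : (Fin K → ℝ) → ℝ)
    (hU : ∀ x y : Fin K → ℝ, (∀ k, x k ≤ y k) → U x ≤ U y)
    (wcs : Fin M → ℂ) (ws : Fin K → Fin M → ℂ)
    (hfeas : pw wcs + ∑ k, pw (ws k) ≤ Pmax)
    (hopt : ∀ (wc : Fin M → ℂ) (w : Fin K → Fin M → ℂ),
      pw wc + ∑ k, pw (w k) ≤ Pmax →
      U (fun k => sinr mr mt σ2 h 1 wc w k) ≤ U (fun k => sinr mr mt σ2 h 1 wcs ws k)) :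
    (pw (0 : Fin M → ℂ) + ∑ k, pw (ws k) ≤ Pmax) ∧
    (∀ (wc : Fin M → ℂ) (w : Fin K → Fin M → ℂ),
      pw wc + ∑ k, pw (w k) ≤ Pmax →
      U (fun k => sinr mr mt σ2 h 1 wc w k)
        ≤ U (fun k => sinr mr mt σ2 h 1 (0 : Fin M → ℂ) ws k)) :=
  stmt0_general h mt mr hmt hmr σ2 hσ Pmax U hU wcs ws hfeas hopt
end
end

section
/- Fix channels h_1, …, h_K ∈ ℂ^M, parameters m_t, m_r ∈ (0,1), noise powers σ_1², …, σ_K² > 0, a power budget P_max > 0, and set δ_SIC = 1. Let U : ℝ^K → ℝ be monotonically nondecreasing in each coordinate. Then the supremum of U(γ_{p,1}, …, γ_{p,K}) over the RSMA feasible set F = {(w_c, w_1, …, w_K) : ‖w_c‖² + Σ_{k=1}^K ‖w_k‖² ≤ P_max} equals the supremum of the same objective over the SDMA feasible subset F₀ = {(w_c, w_1, …, w_K) ∈ F : w_c = 0}. In other words, at fully ineffective SIC the optimal value achievable by RSMA coincides with that achievable by SDMA. -/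
open Matrix Finset

noncomputable section

/-! The common stream only hurts the private streams: its beamformer `w_c` adds
`δ_SIC² |h_kᴴ w_c|² ≥ 0` to the interference and the positive semidefinite matrix `w_c w_cᴴ` to `A`, and
`Φ_{c,k}` is monotone along the positive semidefinite order because `diag~` preserves positive
semidefiniteness. Hence dropping `w_c` never lowers any SINR nor raises the power, so every RSMA
value is dominated by an SDMA value of the nondecreasing utility. -/

open scoped ComplexOrder

lemma Amat_eq_outerProd_add {M K : ℕ} (wc : Fin M → ℂ) (w : Fin K → Fin M → ℂ) :
    Amat wc w = outerProd wc + Amat 0 w := by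
  simp [Amat, outerProd]

section Phi

variable {M : ℕ} {mr mt : ℝ} (σ2 : ℝ) (h : Fin M → ℂ)

lemma Phi_zero : Phi mr mt σ2 h 0 = (1 + mr) * σ2 := by
  simp [Phi, diagTilde]

lemma Phi_le_Phi_add (hmr : 0 ≤ mr) (hmt : 0 ≤ mt) (A : Matrix (Fin M) (Fin M) ℂ)
    {B : Matrix (Fin M) (Fin M) ℂ} (hB : B.PosSemidef) :
    Phi mr mt σ2 h A ≤ Phi mr mt σ2 h (A + B) := by
  have hBΦ : ((mr : ℂ) • B + ((mt * (1 + mr) : ℝ) : ℂ) • diagTilde B).PosSemidef :=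
    (hB.smul (Complex.zero_le_real.mpr hmr)).add
      (hB.diagTilde.smul (Complex.zero_le_real.mpr (by positivity)))
  have hre := (Complex.nonneg_iff.mp (hBΦ.dotProduct_mulVec_nonneg h)).1
  have hsplit : Phi mr mt σ2 h (A + B) = Phi mr mt σ2 h A +
      (star h ⬝ᵥ ((mr : ℂ) • B + ((mt * (1 + mr) : ℝ) : ℂ) • diagTilde B) *ᵥ h).re := by
    simp only [Phi, diagTilde, ← diagonal_add, Matrix.add_apply, smul_add, add_mulVec,
      dotProduct_add, Complex.add_re]
    ring
  linarith

end Phi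

lemma sinr_le_sinr_zero {M K : ℕ} {mr mt : ℝ} (hmr : 0 ≤ mr) (hmt : 0 ≤ mt) {σ2 : Fin K → ℝ}
    (h : Fin K → Fin M → ℂ) (δ : ℝ) (wc : Fin M → ℂ) (w : Fin K → Fin M → ℂ) {k : Fin K}
    (hσ : 0 < σ2 k) :
    sinr mr mt σ2 h δ wc w k ≤ sinr mr mt σ2 h δ 0 w k := by
  unfold sinr
  set I := ∑ i ∈ univ.erase k, ‖star (h k) ⬝ᵥ w i‖ ^ 2
  have hI : 0 ≤ I := sum_nonneg fun _ _ => by positivity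
  have hΦ0 := Phi_pos (σ2 k) (h k) hmr hmt hσ (posSemidef_Amat 0 w)
  have hΦ := Phi_le_Phi_add (σ2 k) (h k) hmr hmt (Amat 0 w) (posSemidef_outerProd wc)
  rw [add_comm, ← Amat_eq_outerProd_add] at hΦ
  rw [dotProduct_zero, norm_zero, zero_pow two_ne_zero, mul_zero, add_zero]
  gcongr
  linarith [mul_nonneg (sq_nonneg δ) (sq_nonneg ‖star (h k) ⬝ᵥ wc‖)]

lemma pw_nonneg {M : ℕ} (w : Fin M → ℂ) : 0 ≤ pw w :=
  sum_nonneg fun _ _ => by positivity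

theorem stmt7_general {M K : ℕ} (h : Fin K → Fin M → ℂ) (mt mr : ℝ)
    (hmt : mt ∈ Set.Ioo (0:ℝ) 1) (hmr : mr ∈ Set.Ioo (0:ℝ) 1)
    (σ2 : Fin K → ℝ) (hσ : ∀ k, 0 < σ2 k) (Pmax : ℝ)
    (U : (Fin K → ℝ) → ℝ)
    (hU : ∀ x y : Fin K → ℝ, (∀ k, x k ≤ y k) → U x ≤ U y) :
    sSup ((fun p : (Fin M → ℂ) × (Fin K → Fin M → ℂ) =>
        U (fun k => sinr mr mt σ2 h 1 p.1 p.2 k)) ''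
      {p | pw p.1 + ∑ k, pw (p.2 k) ≤ Pmax}) =
    sSup ((fun p : (Fin M → ℂ) × (Fin K → Fin M → ℂ) =>
        U (fun k => sinr mr mt σ2 h 1 p.1 p.2 k)) ''
      {p | (pw p.1 + ∑ k, pw (p.2 k) ≤ Pmax) ∧ p.1 = 0}) := by
  apply csSup_eq_csSup_of_forall_exists_le
  · rintro _ ⟨⟨wc, w⟩, hpow, rfl⟩
    have hpow' : pw (0 : Fin M → ℂ) + ∑ k, pw (w k) ≤ Pmax := by
      have : pw (0 : Fin M → ℂ) = 0 := by simp [pw]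
      linarith [pw_nonneg wc, show pw wc + ∑ k, pw (w k) ≤ Pmax from hpow]
    exact ⟨_, ⟨(0, w), ⟨hpow', rfl⟩, rfl⟩,
      hU _ _ fun k => sinr_le_sinr_zero hmr.1.le hmt.1.le h 1 wc w (hσ k)⟩
  · rintro _ ⟨p, hp, rfl⟩
    exact ⟨_, ⟨p, hp.1, rfl⟩, le_rfl⟩

/-- at δ_SIC = 1, the supremum of any nondecreasing utility of the SINRs over
the RSMA feasible set equals the supremum over the SDMA subset {w_c = 0}. -/
theorem stmt7 {M K : ℕ} (h : Fin K → Fin M → ℂ) (mt mr : ℝ)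
    (hmt : mt ∈ Set.Ioo (0:ℝ) 1) (hmr : mr ∈ Set.Ioo (0:ℝ) 1)
    (σ2 : Fin K → ℝ) (hσ : ∀ k, 0 < σ2 k) (Pmax : ℝ) (hP : 0 < Pmax)
    (U : (Fin K → ℝ) → ℝ)
    (hU : ∀ x y : Fin K → ℝ, (∀ k, x k ≤ y k) → U x ≤ U y) :
    sSup ((fun p : (Fin M → ℂ) × (Fin K → Fin M → ℂ) =>
        U (fun k => sinr mr mt σ2 h 1 p.1 p.2 k)) ''
      {p | pw p.1 + ∑ k, pw (p.2 k) ≤ Pmax}) =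
    sSup ((fun p : (Fin M → ℂ) × (Fin K → Fin M → ℂ) =>
        U (fun k => sinr mr mt σ2 h 1 p.1 p.2 k)) ''
      {p | (pw p.1 + ∑ k, pw (p.2 k) ≤ Pmax) ∧ p.1 = 0}) :=
  stmt7_general h mt mr hmt hmr σ2 hσ Pmax U hU
end
end
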